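/- arXiv:1204.2866 — 3 statements merged into one kernel-verified Lean document; each statement's English description precedes it below -/
import Mathlib

section
/- Let A be a bounded operator on a complex Hilbert space H and suppose there exists T ∈ B(H) such that TA = |A| and T|A| = |A|T. Then the kernel of the operator U := P T*, where P is the orthogonal projection onto the closure of ran A, equals ker A, and A = U|A| is the polar decomposition of A provided ‖T‖ ≤ √c for some c (in particular U is a partial isometry with initial space (ker A)^⊥). -/
/-!
Everything rests on `ker P = (ran A)ᗮ = ker A*`. Then `ker (P T*) = ker (A* T*) = ker |A| = ker A`,
since `(TA)* = |A|* = |A|`; and `A* (T* |A|) = |A|² = A* A` puts `A - T* |A|` in `ker P`, so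
`A = P A = P T* |A|`. Finally `‖A x‖ = ‖|A| x‖` makes `U = P T*` isometric on `ran |A|`, hence on
its closure `(ker |A|)ᗮ = (ker A)ᗮ`.
-/

open ContinuousLinearMap
open scoped InnerProduct

theorem norm_apply_eq_norm_of_mem_closure_range {𝕜 E F G : Type*} [NormedField 𝕜]
    [NormedAddCommGroup E] [NormedSpace 𝕜 E] [NormedAddCommGroup F] [NormedSpace 𝕜 F]
    [NormedAddCommGroup G] [NormedSpace 𝕜 G] {U : F →L[𝕜] G} {A : E →L[𝕜] G} {B : E →L[𝕜] F}
    (hUB : U ∘L B = A) (hAB : ∀ x, ‖A x‖ = ‖B x‖) {y : F} (hy : y ∈ closure (Set.range B)) :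
    ‖U y‖ = ‖y‖ := by
  refine Set.EqOn.closure ?_ (continuous_norm.comp U.continuous) continuous_norm hy
  rintro _ ⟨x, rfl⟩
  simp only [Function.comp_apply]
  rw [← comp_apply, hUB, hAB]

namespace ContinuousLinearMap

variable {𝕜 E F : Type*} [RCLike 𝕜]
  [NormedAddCommGroup E] [InnerProductSpace 𝕜 E] [CompleteSpace E]
  [NormedAddCommGroup F] [InnerProductSpace 𝕜 F] [CompleteSpace F]

theorem norm_apply_eq_of_adjoint_comp_self_eq {A B : E →L[𝕜] F} (h : A† ∘L A = B† ∘L B)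
    (x : E) : ‖A x‖ = ‖B x‖ := by
  rw [apply_norm_eq_sqrt_inner_adjoint_left, h, ← apply_norm_eq_sqrt_inner_adjoint_left]

theorem ker_eq_ker_of_adjoint_comp_self_eq {A B : E →L[𝕜] F} (h : A† ∘L A = B† ∘L B) :
    A.ker = B.ker := by
  rw [← ker_adjoint_comp_self A, h, ker_adjoint_comp_self]

theorem ker_eq_orthogonal_of_projection {P : F →L[𝕜] F} {K : Submodule 𝕜 F}
    (hmem : ∀ x, P x ∈ K) (hfix : ∀ x ∈ K, P x = x) (hsa : P† = P) : P.ker = Kᗮ := by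
  have hrange : P.range = K :=
    le_antisymm (by rintro _ ⟨x, rfl⟩; exact hmem x) fun x hx => ⟨x, hfix x hx⟩
  rw [← hrange, orthogonal_range, hsa]

theorem ker_eq_ker_adjoint_of_projection_onto_closure_range {A : E →L[𝕜] F} {P : F →L[𝕜] F}
    (hmem : ∀ x, P x ∈ closure (Set.range A)) (hfix : ∀ x ∈ closure (Set.range A), P x = x)
    (hsa : P† = P) : P.ker = A†.ker := by
  have hK : closure (Set.range A) = ((A.range.topologicalClosure : Submodule 𝕜 F) : Set F) := by
    rw [Submodule.topologicalClosure_coe]; rfl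
  rw [hK] at hmem hfix
  rw [ker_eq_orthogonal_of_projection hmem hfix hsa, Submodule.orthogonal_closure,
    orthogonal_range]

theorem comp_eq_comp_of_adjoint_comp_eq {G : Type*} [AddCommGroup G] [Module 𝕜 G]
    [TopologicalSpace G] {A : E →L[𝕜] F} {P : F →L[𝕜] F} (hP : P.ker = A†.ker)
    {B C : G →L[𝕜] F} (h : A† ∘L B = A† ∘L C) : P ∘L B = P ∘L C := by
  ext x
  have hx : B x - C x ∈ P.ker := by
    rw [hP, LinearMap.mem_ker, coe_coe, map_sub, ← comp_apply, h, comp_apply, sub_self]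
  rwa [LinearMap.mem_ker, coe_coe, map_sub, sub_eq_zero] at hx

end ContinuousLinearMap

theorem polar_decomposition_from_T_general {H : Type*} [NormedAddCommGroup H]
    [InnerProductSpace ℂ H] [CompleteSpace H]
    (A T absA : H →L[ℂ] H)
    (habs_pos : absA.IsPositive)
    (habs_sq : absA ∘L absA = ContinuousLinearMap.adjoint A ∘L A)
    (hTA : T ∘L A = absA)
    (P : H →L[ℂ] H)
    (hPmem : ∀ f, P f ∈ closure (Set.range A))
    (hPfix : ∀ f ∈ closure (Set.range A), P f = f)
    (hPsa : ContinuousLinearMap.adjoint P = P) :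
    LinearMap.ker ((P ∘L ContinuousLinearMap.adjoint T : H →L[ℂ] H) : H →ₗ[ℂ] H) = LinearMap.ker (A : H →ₗ[ℂ] H) ∧
    A = (P ∘L ContinuousLinearMap.adjoint T) ∘L absA ∧
    (∀ f ∈ (LinearMap.ker (A : H →ₗ[ℂ] H))ᗮ, ‖(P ∘L ContinuousLinearMap.adjoint T) f‖ = ‖f‖) := by
  have habs_sa : absA† = absA := isSelfAdjoint_iff'.mp habs_pos.isSelfAdjoint
  have hAA : A† ∘L A = absA† ∘L absA := by rw [habs_sa, habs_sq]
  have hker : A.ker = absA.ker := ker_eq_ker_of_adjoint_comp_self_eq hAA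
  have hPker : P.ker = A†.ker := ker_eq_ker_adjoint_of_projection_onto_closure_range hPmem hPfix hPsa
  have hfac : A = (P ∘L T†) ∘L absA := by
    have hPA : P ∘L A = A := ext fun x => hPfix _ (subset_closure ⟨x, rfl⟩)
    rw [comp_assoc, ← hPA]
    refine comp_eq_comp_of_adjoint_comp_eq hPker ?_
    rw [← comp_assoc, ← adjoint_comp, hTA, hAA]
  refine ⟨?_, hfac, fun f hf => ?_⟩
  · rw [toLinearMap_comp, LinearMap.ker_comp, hPker, ← LinearMap.ker_comp, ← toLinearMap_comp,
      ← adjoint_comp, hTA, habs_sa, hker]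
  · rw [hker, orthogonal_ker, habs_sa, ← SetLike.mem_coe, Submodule.topologicalClosure_coe] at hf
    exact norm_apply_eq_norm_of_mem_closure_range hfac.symm
      (norm_apply_eq_of_adjoint_comp_self_eq hAA) hf

/-- If `TA = |A|` and `T|A| = |A|T` (with `‖T‖ ≤ √c`), and `P` is the orthogonal projection
onto the closure of `ran A`, then `U := P T*` satisfies `ker U = ker A`, `A = U|A|`, and `U`
is isometric on `(ker A)ᗮ`; i.e. `A = U|A|` is the polar decomposition of `A`. -/
theorem polar_decomposition_from_T {H : Type*} [NormedAddCommGroup H]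
    [InnerProductSpace ℂ H] [CompleteSpace H]
    (A T absA : H →L[ℂ] H)
    (habs_pos : absA.IsPositive)
    (habs_sq : absA ∘L absA = ContinuousLinearMap.adjoint A ∘L A)
    (c : ℝ)
    (hTA : T ∘L A = absA)
    (hcomm : T ∘L absA = absA ∘L T)
    (hTnorm : ‖T‖ ≤ Real.sqrt c)
    (P : H →L[ℂ] H)
    (hPmem : ∀ f, P f ∈ closure (Set.range A))
    (hPfix : ∀ f ∈ closure (Set.range A), P f = f)
    (hPsa : ContinuousLinearMap.adjoint P = P) :
    LinearMap.ker ((P ∘L ContinuousLinearMap.adjoint T : H →L[ℂ] H) : H →ₗ[ℂ] H) = LinearMap.ker (A : H →ₗ[ℂ] H) ∧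
    A = (P ∘L ContinuousLinearMap.adjoint T) ∘L absA ∧
    (∀ f ∈ (LinearMap.ker (A : H →ₗ[ℂ] H))ᗮ, ‖(P ∘L ContinuousLinearMap.adjoint T) f‖ = ‖f‖) :=
  polar_decomposition_from_T_general A T absA habs_pos habs_sq hTA P hPmem hPfix hPsa
end

section
/- Let Sλ be a densely defined weighted shift on a directed tree T with weights λ, and E the spectral measure of |Sλ|. Then ⟨E(·)|Sλ|f, |Sλ|f⟩ is absolutely continuous with respect to ⟨E(·)Sλ f, Sλ f⟩ for every f ∈ dom(Sλ) if and only if for every u ∈ V with ‖Sλ e_u‖ ≠ 0 there exists v ∈ Chi(u) with λ_v ≠ 0 and ‖Sλ e_v‖ = ‖Sλ e_u‖. -/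
open ContinuousLinearMap MeasureTheory

local notation "⟪" x ", " y "⟫" => @inner ℂ _ _ x y

/-- A directed tree encoded by a parent function: `isRoot` singles out the root (if any),
`par` assigns to each non-root vertex its parent (and fixes the root); the tree is acyclic
and connected. `V° = {v | ¬ isRoot v}` and `Chi u = {v ∈ V° | par v = u}`. -/
structure DirectedTree (V : Type*) : Type _ where
  isRoot : V → Prop
  par : V → V
  root_unique : ∀ u v, isRoot u → isRoot v → u = v
  par_root : ∀ v, isRoot v → par v = v
  par_ne_self : ∀ v, ¬ isRoot v → par v ≠ v
  acyclic : ∀ (v : V) (n : ℕ), 0 < n → par^[n] v = v → isRoot v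
  connected : ∀ u v : V, ∃ m n : ℕ, par^[m] u = par^[n] v

open Classical in
/-- The formal weighted-shift action: `(Λ f)(v) = λ_v · f(par v)` for non-root `v`, `0` at
the root. The weighted shift `S_λ` is the operator `f ↦ Λ f` on the domain
`{f ∈ ℓ²(V) | Λ f ∈ ℓ²(V)}`. -/
noncomputable def shiftFun {V : Type*} (T : DirectedTree V) (lam : V → ℂ) (f : V → ℂ) :
    V → ℂ :=
  fun v => if T.isRoot v then 0 else lam v * f (T.par v)

open Classical in
/-- The basis vector `e_u` of `ℓ²(V)` as a plain function. -/
noncomputable def eVec {V : Type*} (u : V) : V → ℂ := fun v => if v = u then 1 else 0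

/-- `‖S_λ e_u‖`, given that `e_u` lies in the domain of `S_λ`. -/
noncomputable def swnorm {V : Type*} (T : DirectedTree V) (lam : V → ℂ)
    (he : ∀ u : V, Memℓp (shiftFun T lam (eVec u)) 2) (u : V) : ℝ :=
  ‖(⟨shiftFun T lam (eVec u), he u⟩ : lp (fun _ : V => ℂ) 2)‖

/-- `E` is the spectral measure of the (possibly unbounded) self-adjoint diagonal operator on
`ℓ²(V)` with diagonal `d` (together with the scalar measures `μ f = ⟨E(·)f, f⟩`). -/
structure IsDiagSpectralMeasure {V : Type*} (d : V → ℝ)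
    (E : Set ℝ → (lp (fun _ : V => ℂ) 2 →L[ℂ] lp (fun _ : V => ℂ) 2))
    (μ : lp (fun _ : V => ℂ) 2 → Measure ℝ) : Prop where
  selfadj : ∀ σ : Set ℝ, MeasurableSet σ → ContinuousLinearMap.adjoint (E σ) = E σ
  inter : ∀ σ τ : Set ℝ, MeasurableSet σ → MeasurableSet τ → E σ ∘L E τ = E (σ ∩ τ)
  univ : E Set.univ = 1
  compat : ∀ f (σ : Set ℝ), MeasurableSet σ → (μ f σ).toReal = (⟪E σ f, f⟫).re
  domIff : ∀ f : lp (fun _ : V => ℂ) 2,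
    Memℓp (fun v => (d v : ℂ) * f v) 2 ↔ Integrable (fun x => x ^ 2) (μ f)
  moment1 : ∀ (f : lp (fun _ : V => ℂ) 2) (hf : Memℓp (fun v => (d v : ℂ) * f v) 2),
    (⟪(⟨fun v => (d v : ℂ) * f v, hf⟩ : lp (fun _ : V => ℂ) 2), f⟫).re = ∫ x, x ∂(μ f)
  moment2 : ∀ (f : lp (fun _ : V => ℂ) 2) (hf : Memℓp (fun v => (d v : ℂ) * f v) 2),
    ‖(⟨fun v => (d v : ℂ) * f v, hf⟩ : lp (fun _ : V => ℂ) 2)‖ ^ 2 = ∫ x, x ^ 2 ∂(μ f)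

/-! The axioms of `IsDiagSpectralMeasure` pin `E` down completely: the moment conditions give
`μ e_u` mean `d u` and second moment `(d u)²`, hence zero variance, so `μ e_u = δ_{d u}`; then
`⟪E σ e_u, e_u⟫ = 𝟙_σ (d u)` and, `E σ` being an orthogonal projection, `E σ e_u = 𝟙_σ (d u) e_u`.
By self-adjointness `E σ` multiplies every vector by `𝟙_σ ∘ d`, so `⟪E σ g, g⟫ = ‖E σ g‖²`
vanishes iff `g` vanishes on `d⁻¹ σ`, where `d u = ‖S e_u‖`.

The absolute continuity thus says: whenever `S f` vanishes on `d⁻¹ σ`, so does `d · f`.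
If `d u ∈ σ` is nonzero and `v` is a child of `u` with `λ_v ≠ 0` and `d v = d u`, then
`0 = (S f)(v) = λ_v f(u)`. Conversely, if `u` has no such child, then `S e_u` vanishes on
`d⁻¹ {d u}` while `d · e_u` does not; the explicit model `E σ = 𝟙_{d⁻¹ σ}`,
`μ f = ∑_v |f v|² δ_{d v}` shows that such a pair `E`, `μ` exists. -/

local notation "ℓ²[" V "]" => lp (fun _ : V => ℂ) 2

theorem ContinuousLinearMap.inner_apply_self_eq_inner_apply_apply {𝕜 H : Type*} [RCLike 𝕜]
    [NormedAddCommGroup H] [InnerProductSpace 𝕜 H] [CompleteSpace H] {P : H →L[𝕜] H}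
    (hsa : adjoint P = P) (hid : P ∘L P = P) (x : H) :
    inner 𝕜 (P x) x = inner 𝕜 (P x) (P x) := by
  conv_rhs => rw [← adjoint_inner_left, hsa, ← comp_apply, hid]

theorem ProbabilityTheory.ae_eq_of_integral_eq_of_integral_sq_eq {ν : Measure ℝ}
    [IsProbabilityMeasure ν] {a : ℝ} (hint : Integrable (fun x => x ^ 2) ν)
    (h1 : ∫ x, x ∂ν = a) (h2 : ∫ x, x ^ 2 ∂ν = a ^ 2) : ∀ᵐ x ∂ν, x = a := by
  have hX : MemLp id 2 ν := (memLp_two_iff_integrable_sq aestronglyMeasurable_id).2 hint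
  have hvar : variance id ν = 0 := by
    rw [variance_eq_sub hX]
    simp [h1, h2]
  have hevar : evariance id ν = 0 :=
    (ENNReal.toReal_eq_zero_iff _).1 hvar |>.resolve_right (evariance_lt_top hX).ne
  filter_upwards [(evariance_eq_zero_iff measurable_id.aemeasurable).1 hevar] with x hx
  simpa [h1] using hx

theorem MeasureTheory.Measure.eq_dirac_of_ae_eq {α : Type*} [MeasurableSpace α]
    [MeasurableSingletonClass α] {ν : Measure α} [IsProbabilityMeasure ν] {a : α}
    (h : ∀ᵐ x ∂ν, x = a) : ν = Measure.dirac a := by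
  have hν : ν {a} = 1 := by
    rw [← prob_compl_eq_zero_iff (measurableSet_singleton a)]
    exact ae_iff.1 h
  rw [← Measure.restrict_eq_self_of_ae_mem (s := {a}) h, Measure.restrict_singleton, hν, one_smul]

theorem memℓp_two_iff_summable_sq {α : Type*} {E : α → Type*} [∀ i, NormedAddCommGroup (E i)]
    (f : ∀ i, E i) : Memℓp f 2 ↔ Summable fun i => ‖f i‖ ^ 2 := by
  rw [memℓp_gen_iff (by norm_num)]
  norm_num

namespace lp

theorem norm_sq_eq_tsum {α : Type*} {E : α → Type*} [∀ i, NormedAddCommGroup (E i)]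
    (f : lp E 2) : ‖f‖ ^ 2 = ∑' i, ‖f i‖ ^ 2 := by
  simpa using lp.norm_rpow_eq_tsum (p := 2) (by norm_num) f

theorem re_inner_eq_tsum {V : Type*} (f g : ℓ²[V]) :
    (⟪f, g⟫).re = ∑' v, (⟪f v, g v⟫).re := by
  rw [lp.inner_eq_tsum, Complex.re_tsum (lp.summable_inner f g)]

theorem coe_mul_single_one {V : Type*} [DecidableEq V] (c : V → ℂ) (u : V) :
    (fun v => c v * (lp.single 2 u 1 : ℓ²[V]) v) = lp.single 2 u (c u) := by
  ext v
  by_cases hv : v = u <;> simp [lp.single_apply, hv]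

section IndicatorCLM

variable {𝕜 α E : Type*} [NormedField 𝕜] [NormedAddCommGroup E] [NormedSpace 𝕜 E]
  {p : ENNReal} [Fact (1 ≤ p)]

variable (𝕜 E p) in
noncomputable def indicatorCLM (s : Set α) :
    lp (fun _ : α => E) p →L[𝕜] lp (fun _ : α => E) p :=
  LinearMap.mkContinuous
    { toFun f := ⟨s.indicator f, (lp.memℓp f).mono' fun i => norm_indicator_le_norm_self _ _⟩
      map_add' f g := lp.ext (s.indicator_add f g)
      map_smul' c f := lp.ext (s.indicator_const_smul c f) }
    1 fun f => by
      rw [one_mul]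
      exact lp.norm_mono (zero_lt_one.trans_le Fact.out).ne'
        fun i => norm_indicator_le_norm_self _ _

@[simp]
theorem coe_indicatorCLM (s : Set α) (f : lp (fun _ : α => E) p) :
    ⇑(indicatorCLM 𝕜 E p s f) = s.indicator f :=
  rfl

end IndicatorCLM

end lp

namespace IsDiagSpectralMeasure

variable {V : Type*} {d : V → ℝ} {E : Set ℝ → (ℓ²[V] →L[ℂ] ℓ²[V])} {μ : ℓ²[V] → Measure ℝ}
  {σ : Set ℝ}

theorem inner_apply_self (h : IsDiagSpectralMeasure d E μ) (hσ : MeasurableSet σ)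
    (f : ℓ²[V]) : ⟪E σ f, f⟫ = ⟪E σ f, E σ f⟫ :=
  inner_apply_self_eq_inner_apply_apply (h.selfadj σ hσ)
    (by rw [h.inter σ σ hσ hσ, Set.inter_self]) f

theorem isProbabilityMeasure_single [DecidableEq V] (h : IsDiagSpectralMeasure d E μ) (u : V) :
    IsProbabilityMeasure (μ (lp.single 2 u 1)) := by
  have h1 : (μ (lp.single 2 u 1) Set.univ).toReal = 1 := by
    rw [h.compat _ _ MeasurableSet.univ, h.univ, one_apply_eq_self, ← RCLike.re_to_complex,
      inner_self_eq_norm_sq, lp.norm_single (by norm_num)]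
    simp
  exact ⟨(ENNReal.toReal_eq_one_iff _).1 h1⟩

theorem measure_single [DecidableEq V] (h : IsDiagSpectralMeasure d E μ) (u : V) :
    μ (lp.single 2 u 1) = Measure.dirac (d u) := by
  have := h.isProbabilityMeasure_single u
  have hde := lp.coe_mul_single_one (fun v => (d v : ℂ)) u
  have hmem : Memℓp (fun v => (d v : ℂ) * (lp.single 2 u 1 : ℓ²[V]) v) 2 := hde ▸ lp.memℓp _
  have hsingle : (⟨_, hmem⟩ : ℓ²[V]) = lp.single 2 u (d u : ℂ) := lp.ext hde
  refine Measure.eq_dirac_of_ae_eq <|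
    ProbabilityTheory.ae_eq_of_integral_eq_of_integral_sq_eq ((h.domIff _).1 hmem) ?_ ?_
  · rw [← h.moment1 _ hmem, hsingle, lp.inner_single_left]
    simp
  · rw [← h.moment2 _ hmem, hsingle, lp.norm_single (by norm_num)]
    simp

theorem re_inner_apply_single [DecidableEq V] (h : IsDiagSpectralMeasure d E μ)
    (hσ : MeasurableSet σ) (u : V) :
    (⟪E σ (lp.single 2 u 1), lp.single 2 u 1⟫).re = σ.indicator 1 (d u) := by
  rw [← h.compat _ _ hσ, h.measure_single, Measure.dirac_apply' _ hσ]
  by_cases hu : d u ∈ σ <;> simp [hu]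

open Classical in
theorem apply_single [DecidableEq V] (h : IsDiagSpectralMeasure d E μ) (hσ : MeasurableSet σ)
    (u : V) : E σ (lp.single 2 u 1) = if d u ∈ σ then lp.single 2 u 1 else 0 := by
  have hnorm : ‖E σ (lp.single 2 u 1)‖ ^ 2 = σ.indicator 1 (d u) := by
    rw [← h.re_inner_apply_single hσ, h.inner_apply_self hσ, ← RCLike.re_to_complex,
      inner_self_eq_norm_sq]
  split_ifs with hu
  · rw [← sub_eq_zero, ← norm_eq_zero, ← sq_eq_zero_iff, norm_sub_sq (𝕜 := ℂ), hnorm,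
      RCLike.re_to_complex, h.re_inner_apply_single hσ, lp.norm_single (by norm_num)]
    norm_num [hu]
  · rw [← norm_eq_zero, ← sq_eq_zero_iff, hnorm]
    simp [hu]

open Classical in
theorem apply_apply (h : IsDiagSpectralMeasure d E μ) (hσ : MeasurableSet σ) (f : ℓ²[V])
    (w : V) : E σ f w = if d w ∈ σ then f w else 0 := by
  calc E σ f w = ⟪lp.single 2 w 1, E σ f⟫ := by simp [lp.inner_single_left]
    _ = ⟪E σ (lp.single 2 w 1), f⟫ := by rw [← adjoint_inner_left, h.selfadj σ hσ]
    _ = if d w ∈ σ then f w else 0 := by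
      rw [h.apply_single hσ]
      split_ifs <;> simp [lp.inner_single_left]

theorem inner_apply_self_eq_zero_iff (h : IsDiagSpectralMeasure d E μ) (hσ : MeasurableSet σ)
    (f : ℓ²[V]) : ⟪E σ f, f⟫ = 0 ↔ ∀ v, d v ∈ σ → f v = 0 := by
  rw [h.inner_apply_self hσ, inner_self_eq_zero, lp.ext_iff, funext_iff]
  simp [h.apply_apply hσ]

end IsDiagSpectralMeasure

section DiagonalModel

variable {V : Type*}

noncomputable def diagMeasure (d : V → ℝ) (f : V → ℂ) : Measure ℝ :=
  Measure.sum fun v => ‖f v‖ₑ ^ 2 • Measure.dirac (d v)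

variable {d : V → ℝ}

theorem diagMeasure_apply (f : V → ℂ) {σ : Set ℝ} (hσ : MeasurableSet σ) :
    (diagMeasure d f σ).toReal = ∑' v, ‖f v‖ ^ 2 * σ.indicator 1 (d v) := by
  rw [diagMeasure, Measure.sum_apply _ hσ, ENNReal.tsum_toReal_eq fun v => ?_]
  · congr 1 with v
    by_cases hv : d v ∈ σ <;> simp [Measure.dirac_apply' _ hσ, hv]
  · by_cases hv : d v ∈ σ <;> simp [Measure.dirac_apply' _ hσ, hv]

theorem integrable_diagMeasure_iff (f : V → ℂ) {g : ℝ → ℝ} (hg : Measurable g) :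
    Integrable g (diagMeasure d f) ↔ Summable fun v => ‖f v‖ ^ 2 * ‖g (d v)‖ := by
  rw [Integrable, and_iff_right hg.aestronglyMeasurable, HasFiniteIntegral, lt_top_iff_ne_top,
    diagMeasure, lintegral_sum_measure]
  simp only [lintegral_smul_measure, lintegral_dirac, smul_eq_mul]
  convert tsum_enorm_ne_top_iff_summable_norm (f := fun v => ‖f v‖ ^ 2 * g (d v)) using 3 <;>
    simp [enorm_mul, norm_mul]

theorem integral_diagMeasure (f : V → ℂ) {g : ℝ → ℝ} (hg : Integrable g (diagMeasure d f)) :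
    ∫ x, g x ∂diagMeasure d f = ∑' v, ‖f v‖ ^ 2 * g (d v) := by
  rw [diagMeasure, integral_sum_measure hg]
  simp [integral_smul_measure]

theorem summable_norm_sq_mul_norm_of_memℓp_mul {f : ℓ²[V]}
    (hf : Memℓp (fun v => (d v : ℂ) * f v) 2) : Summable fun v => ‖f v‖ ^ 2 * ‖d v‖ := by
  refine .of_nonneg_of_le (fun v => by positivity) (fun v => ?_)
    (((memℓp_two_iff_summable_sq _).1 hf).add ((memℓp_two_iff_summable_sq f).1 (lp.memℓp f)))
  have hd : ‖d v‖ ≤ d v ^ 2 + 1 := by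
    nlinarith [Real.norm_eq_abs (d v), sq_abs (d v), abs_nonneg (d v)]
  calc ‖f v‖ ^ 2 * ‖d v‖ ≤ ‖f v‖ ^ 2 * (d v ^ 2 + 1) := by gcongr
    _ = ‖(d v : ℂ) * f v‖ ^ 2 + ‖f v‖ ^ 2 := by simp [mul_pow]; ring

variable (d) in
theorem isDiagSpectralMeasure_indicatorCLM_diagMeasure :
    IsDiagSpectralMeasure d (fun σ => lp.indicatorCLM ℂ ℂ 2 (d ⁻¹' σ))
      (fun f => diagMeasure d f) where
  selfadj σ _ := by
    refine ((eq_adjoint_iff _ _).2 fun f g => ?_).symm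
    rw [lp.inner_eq_tsum, lp.inner_eq_tsum]
    congr 1 with v
    by_cases hv : d v ∈ σ <;> simp [hv]
  inter σ τ _ _ := by
    ext f v
    simp [Set.indicator_indicator, Set.preimage_inter]
  univ := by
    ext f v
    simp
  compat f σ hσ := by
    rw [diagMeasure_apply _ hσ, lp.re_inner_eq_tsum]
    congr 1 with v
    by_cases hv : d v ∈ σ <;> simp [hv, ← Complex.ofReal_pow]
  domIff f := by
    rw [integrable_diagMeasure_iff (g := fun x => x ^ 2) _ (by fun_prop),
      memℓp_two_iff_summable_sq]
    simp [mul_pow, mul_comm]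
  moment1 f hf := by
    rw [integral_diagMeasure _ ((integrable_diagMeasure_iff (g := fun x => x) _ measurable_id).2
      (summable_norm_sq_mul_norm_of_memℓp_mul hf)), lp.re_inner_eq_tsum]
    congr 1 with v
    simp [Complex.sq_norm, Complex.normSq_apply]
    ring
  moment2 f hf := by
    rw [integral_diagMeasure (g := fun x => x ^ 2), lp.norm_sq_eq_tsum]
    · congr 1 with v
      simp [mul_pow, mul_comm]
    · rw [integrable_diagMeasure_iff (g := fun x => x ^ 2) _ (by fun_prop)]
      simpa [mul_pow, mul_comm] using (memℓp_two_iff_summable_sq _).1 hf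

end DiagonalModel

section WeightedShift

variable {V : Type*} {T : DirectedTree V} {lam : V → ℂ}

theorem lp.coe_single_one_eq_eVec [DecidableEq V] (u : V) :
    ⇑(lp.single 2 u 1 : ℓ²[V]) = eVec u := by
  ext v
  by_cases hv : v = u <;> simp [eVec, lp.single_apply, hv]

theorem shiftFun_eVec_eq_zero {u v : V} (h : ¬T.isRoot v → T.par v = u → lam v = 0) :
    shiftFun T lam (eVec u) v = 0 := by
  by_cases hr : T.isRoot v <;> by_cases hp : T.par v = u <;> simp_all [shiftFun, eVec]

theorem apply_par_eq_zero_of_shiftFun_eq_zero {f : V → ℂ} {v : V} (hr : ¬T.isRoot v)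
    (hlam : lam v ≠ 0) (h : shiftFun T lam f v = 0) : f (T.par v) = 0 := by
  simpa [shiftFun, hr, hlam] using h

end WeightedShift
theorem weighted_shift_absolutely_continuous_iff_general {V : Type*} (T : DirectedTree V)
    (lam : V → ℂ)
    (he : ∀ u : V, Memℓp (shiftFun T lam (eVec u)) 2) :
    (∀ (E : Set ℝ → (lp (fun _ : V => ℂ) 2 →L[ℂ] lp (fun _ : V => ℂ) 2))
        (μ : lp (fun _ : V => ℂ) 2 → Measure ℝ),
      IsDiagSpectralMeasure (swnorm T lam he) E μ →
      ∀ (f : lp (fun _ : V => ℂ) 2) (hf : Memℓp (shiftFun T lam (fun v => f v)) 2)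
        (hf' : Memℓp (fun v => ((swnorm T lam he v : ℝ) : ℂ) * f v) 2),
        ∀ (σ : Set ℝ), MeasurableSet σ →
          ⟪E σ (⟨shiftFun T lam (fun v => f v), hf⟩ : lp (fun _ : V => ℂ) 2),
            (⟨shiftFun T lam (fun v => f v), hf⟩ : lp (fun _ : V => ℂ) 2)⟫ = 0 →
          ⟪E σ (⟨fun v => ((swnorm T lam he v : ℝ) : ℂ) * f v, hf'⟩ :
              lp (fun _ : V => ℂ) 2),
            (⟨fun v => ((swnorm T lam he v : ℝ) : ℂ) * f v, hf'⟩ :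
              lp (fun _ : V => ℂ) 2)⟫ = 0) ↔
    (∀ u : V, swnorm T lam he u ≠ 0 →
      ∃ v : V, ¬ T.isRoot v ∧ T.par v = u ∧ lam v ≠ 0 ∧
        swnorm T lam he v = swnorm T lam he u) := by
  classical
  set d := swnorm T lam he
  constructor
  · intro hac u hu
    by_contra! hno
    have hE := isDiagSpectralMeasure_indicatorCLM_diagMeasure d
    have hS : Memℓp (shiftFun T lam (lp.single 2 u 1 : ℓ²[V])) 2 :=
      lp.coe_single_one_eq_eVec u ▸ he u
    have hde : Memℓp (fun v => (d v : ℂ) * (lp.single 2 u 1 : ℓ²[V]) v) 2 := by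
      rw [lp.coe_mul_single_one]
      exact lp.memℓp _
    have hvanish : ∀ v, d v ∈ ({d u} : Set ℝ) → shiftFun T lam (lp.single 2 u 1 : ℓ²[V]) v = 0 := by
      intro v hv
      rw [lp.coe_single_one_eq_eVec]
      exact shiftFun_eVec_eq_zero fun hr hp => not_not.1 fun hlam => hno v hr hp hlam hv
    have hac_u := hac _ _ hE _ hS hde {d u} (measurableSet_singleton _)
    simp only [hE.inner_apply_self_eq_zero_iff (measurableSet_singleton _)] at hac_u
    exact hu (by simpa using hac_u hvanish u rfl)
  · intro hchild E μ hE f hS hde σ hσ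
    rw [hE.inner_apply_self_eq_zero_iff hσ, hE.inner_apply_self_eq_zero_iff hσ]
    intro hSσ u hu
    by_cases hdu : d u = 0
    · simp [hdu]
    obtain ⟨v, hr, rfl, hlam, hdv⟩ := hchild u hdu
    simp [apply_par_eq_zero_of_shiftFun_eq_zero hr hlam (hSσ v (hdv ▸ hu))]

/-- For a densely defined weighted shift `S_λ` on a directed tree with `E` the spectral
measure of `|S_λ|`: `⟨E(·)|S_λ|f, |S_λ|f⟩ ≪ ⟨E(·)S_λ f, S_λ f⟩` for every `f` in the
domain of `S_λ` iff for every `u` with `‖S_λ e_u‖ ≠ 0` there exists a child `v` of `u`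
with `λ_v ≠ 0` and `‖S_λ e_v‖ = ‖S_λ e_u‖`. -/
theorem weighted_shift_absolutely_continuous_iff {V : Type*} (T : DirectedTree V)
    (lam : V → ℂ)
    (hdense : Dense {f : lp (fun _ : V => ℂ) 2 | Memℓp (shiftFun T lam (fun v => f v)) 2})
    (he : ∀ u : V, Memℓp (shiftFun T lam (eVec u)) 2) :
    (∀ (E : Set ℝ → (lp (fun _ : V => ℂ) 2 →L[ℂ] lp (fun _ : V => ℂ) 2))
        (μ : lp (fun _ : V => ℂ) 2 → Measure ℝ),
      IsDiagSpectralMeasure (swnorm T lam he) E μ →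
      ∀ (f : lp (fun _ : V => ℂ) 2) (hf : Memℓp (shiftFun T lam (fun v => f v)) 2)
        (hf' : Memℓp (fun v => ((swnorm T lam he v : ℝ) : ℂ) * f v) 2),
        ∀ (σ : Set ℝ), MeasurableSet σ →
          ⟪E σ (⟨shiftFun T lam (fun v => f v), hf⟩ : lp (fun _ : V => ℂ) 2),
            (⟨shiftFun T lam (fun v => f v), hf⟩ : lp (fun _ : V => ℂ) 2)⟫ = 0 →
          ⟪E σ (⟨fun v => ((swnorm T lam he v : ℝ) : ℂ) * f v, hf'⟩ :
              lp (fun _ : V => ℂ) 2),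
            (⟨fun v => ((swnorm T lam he v : ℝ) : ℂ) * f v, hf'⟩ :
              lp (fun _ : V => ℂ) 2)⟫ = 0) ↔
    (∀ u : V, swnorm T lam he u ≠ 0 →
      ∃ v : V, ¬ T.isRoot v ∧ T.par v = u ∧ lam v ≠ 0 ∧
        swnorm T lam he v = swnorm T lam he u) :=
  weighted_shift_absolutely_continuous_iff_general T lam he
end

section
/- Let A be a bounded operator on a complex Hilbert space H, E the spectral measure of |A|, and suppose ⟨E(·)Af, Af⟩ ≪ ⟨E(·)|A|f, |A|f⟩ (absolute continuity of finite Borel measures on ℝ₊) for every f ∈ H. Then A is quasinormal. -/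
open ContinuousLinearMap MeasureTheory

local notation "⟪" x ", " y "⟫" => @inner ℂ _ _ x y

/-- `E` is the spectral measure of the (bounded, positive) operator `D`, together with the
associated family of scalar Borel measures `μ f = ⟨E(·)f, f⟩`. -/
structure IsSpectralMeasure {H : Type*} [NormedAddCommGroup H] [InnerProductSpace ℂ H]
    [CompleteSpace H] (D : H →L[ℂ] H) (E : Set ℝ → H →L[ℂ] H)
    (μ : H → Measure ℝ) : Prop where
  selfadj : ∀ σ : Set ℝ, MeasurableSet σ → ContinuousLinearMap.adjoint (E σ) = E σ
  inter : ∀ σ τ : Set ℝ, MeasurableSet σ → MeasurableSet τ → E σ ∘L E τ = E (σ ∩ τ)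
  univ : E Set.univ = 1
  support_nonneg : E (Set.Iio 0) = 0
  compat : ∀ (f : H) (σ : Set ℝ), MeasurableSet σ → (μ f σ).toReal = (⟪E σ f, f⟫).re
  finite : ∀ f, IsFiniteMeasure (μ f)
  moment_int : ∀ f, Integrable (fun x => x ^ 2) (μ f)
  moment1 : ∀ f : H, (⟪D f, f⟫).re = ∫ x, x ∂(μ f)
  moment2 : ∀ f : H, ‖D f‖ ^ 2 = ∫ x, x ^ 2 ∂(μ f)

/-!
Absolute continuity, applied to `σᶜ` and vectors in the range of `E σ`, says that `A` maps the
range of every spectral projection `E σ` into itself, so `A` commutes with all `E σ`. So does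
`|A|`, and `‖Af‖ = ‖|A|f‖`; hence `Af` and `|A|f` have the same spectral measure. Comparing first
moments gives `A*|A|A = |A|³`, comparing second moments gives `‖|A|Af‖ = ‖|A|²f‖`, and together
they force `‖A|A|f - |A|Af‖ = 0`. Thus `U|A| = |A|U` on the range of `|A|`, and both sides vanish
on its orthogonal complement `ker |A| = ker A ⊆ ker U`.
-/

namespace ContinuousLinearMap

variable {H : Type*} [NormedAddCommGroup H] [InnerProductSpace ℂ H] [CompleteSpace H]

theorem IsSelfAdjoint.eq_of_re_inner_self_eq {S T : H →L[ℂ] H} (hS : IsSelfAdjoint S)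
    (hT : IsSelfAdjoint T) (h : ∀ x, (⟪S x, x⟫).re = (⟪T x, x⟫).re) : S = T := by
  have hST : ((S - T : H →L[ℂ] H) : H →ₗ[ℂ] H) = 0 := by
    refine (inner_map_self_eq_zero _).mp fun x => ?_
    rw [← (hS.sub hT).isSymmetric.coe_re_inner_apply_self x]
    simp [inner_sub_left, h x]
  exact sub_eq_zero.mp (coe_injective hST)

theorem norm_apply_eq_of_comp_self_eq_adjoint_comp {A D : H →L[ℂ] H} (hD : IsSelfAdjoint D)
    (h : D ∘L D = adjoint A ∘L A) (x : H) : ‖A x‖ = ‖D x‖ := by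
  have hsq : ‖A x‖ ^ 2 = ‖D x‖ ^ 2 := by
    rw [apply_norm_sq_eq_inner_adjoint_left, apply_norm_sq_eq_inner_adjoint_left, ← h,
      hD.adjoint_eq]
  exact (pow_left_inj₀ (norm_nonneg _) (norm_nonneg _) two_ne_zero).mp hsq

theorem eq_of_comp_eq_of_eq_on_ker {S T P : H →L[ℂ] H} (hP : IsSelfAdjoint P)
    (hrange : S ∘L P = T ∘L P) (hker : ∀ x, P x = 0 → S x = T x) : S = T := by
  set K := LinearMap.ker ((S - T : H →L[ℂ] H) : H →ₗ[ℂ] H)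
  have : K.HasOrthogonalProjection := by
    have : CompleteSpace K := (isClosed_ker (S - T)).completeSpace_coe
    infer_instance
  have hKrange : Kᗮ ≤ LinearMap.ker (P : H →ₗ[ℂ] H) := by
    have : LinearMap.range (P : H →ₗ[ℂ] H) ≤ K := by
      rintro _ ⟨x, rfl⟩
      simpa [K, sub_eq_zero] using congr($hrange x)
    simpa [orthogonal_range, hP.adjoint_eq] using Submodule.orthogonal_le this
  have hKker : Kᗮ ≤ (LinearMap.ker (P : H →ₗ[ℂ] H))ᗮ := Submodule.orthogonal_le fun x hx => by
    simpa [K, sub_eq_zero] using hker x hx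
  have hK : K = ⊤ := Submodule.orthogonal_eq_bot_iff.mp <| eq_bot_iff.mpr <|
    (le_inf hKrange hKker).trans (Submodule.inf_orthogonal_eq_bot _).le
  ext x
  simpa [K, sub_eq_zero] using hK.ge (Submodule.mem_top (x := x))

theorem comp_comm_of_adjoint_comp_comp_eq {A D : H →L[ℂ] H} (hD : IsSelfAdjoint D)
    (h2 : D ∘L D = adjoint A ∘L A) (h3 : adjoint A ∘L D ∘L A = D ∘L D ∘L D)
    (hDA : ∀ x, ‖D (A x)‖ = ‖D (D x)‖) : A ∘L D = D ∘L A := by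
  have hDsymm : ∀ x y, ⟪D x, y⟫ = ⟪x, D y⟫ := hD.isSymmetric
  ext f
  have hcross : ⟪A (D f), D (A f)⟫ = ((‖D (D f)‖ ^ 2 : ℝ) : ℂ) := by
    calc ⟪A (D f), D (A f)⟫ = ⟪(adjoint A ∘L D ∘L A) (D f), f⟫ := by
          rw [← hDsymm, comp_apply, comp_apply, adjoint_inner_left]
      _ = ⟪D (D f), D (D f)⟫ := by rw [h3, comp_apply, comp_apply, hDsymm, hDsymm]
      _ = ((‖D (D f)‖ ^ 2 : ℝ) : ℂ) := by rw [inner_self_eq_norm_sq_to_K]; norm_cast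
  have hsq : ‖A (D f) - D (A f)‖ ^ 2 = 0 := by
    rw [@norm_sub_sq ℂ, RCLike.re_to_complex, hcross, Complex.ofReal_re,
      norm_apply_eq_of_comp_self_eq_adjoint_comp hD h2, hDA]
    ring
  simpa [sub_eq_zero] using hsq

end ContinuousLinearMap

namespace IsSpectralMeasure

variable {H : Type*} [NormedAddCommGroup H] [InnerProductSpace ℂ H] [CompleteSpace H]
  {D : H →L[ℂ] H} {E : Set ℝ → H →L[ℂ] H} {μ : H → Measure ℝ} {σ τ : Set ℝ}

theorem isSelfAdjoint (hE : IsSpectralMeasure D E μ) (hσ : MeasurableSet σ) :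
    IsSelfAdjoint (E σ) :=
  isSelfAdjoint_iff'.mpr (hE.selfadj σ hσ)

theorem inner_apply_left (hE : IsSpectralMeasure D E μ) (hσ : MeasurableSet σ) (x y : H) :
    ⟪E σ x, y⟫ = ⟪x, E σ y⟫ :=
  (hE.isSelfAdjoint hσ).isSymmetric x y

theorem apply_apply (hE : IsSpectralMeasure D E μ) (hσ : MeasurableSet σ)
    (hτ : MeasurableSet τ) (x : H) : E σ (E τ x) = E (σ ∩ τ) x := by
  rw [← hE.inter σ τ hσ hτ, comp_apply]

theorem apply_apply_self (hE : IsSpectralMeasure D E μ) (hσ : MeasurableSet σ) (x : H) :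
    E σ (E σ x) = E σ x := by
  rw [hE.apply_apply hσ hσ, Set.inter_self]

theorem empty (hE : IsSpectralMeasure D E μ) : E ∅ = 0 := by
  have h := hE.inter (Set.Iio 0) ∅ measurableSet_Iio MeasurableSet.empty
  rwa [hE.support_nonneg, zero_comp, Set.inter_empty, eq_comm] at h

theorem apply_apply_of_disjoint (hE : IsSpectralMeasure D E μ) (hσ : MeasurableSet σ)
    (hτ : MeasurableSet τ) (hστ : Disjoint σ τ) (x : H) : E σ (E τ x) = 0 := by
  rw [hE.apply_apply hσ hτ, hστ.inter_eq, hE.empty, zero_apply]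

theorem inner_apply_self (hE : IsSpectralMeasure D E μ) (hσ : MeasurableSet σ) (x : H) :
    ⟪E σ x, x⟫ = ((‖E σ x‖ ^ 2 : ℝ) : ℂ) := by
  rw [← hE.apply_apply_self hσ, hE.inner_apply_left hσ, hE.apply_apply_self hσ,
    inner_self_eq_norm_sq_to_K]
  norm_cast

theorem inner_apply_self_eq_zero_iff (hE : IsSpectralMeasure D E μ) (hσ : MeasurableSet σ)
    (x : H) : ⟪E σ x, x⟫ = 0 ↔ E σ x = 0 := by
  rw [hE.inner_apply_self hσ]
  norm_cast
  simp

theorem measure_toReal (hE : IsSpectralMeasure D E μ) (hσ : MeasurableSet σ) (x : H) :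
    (μ x σ).toReal = ‖E σ x‖ ^ 2 := by
  rw [hE.compat x σ hσ, hE.inner_apply_self hσ, Complex.ofReal_re]

theorem add_compl (hE : IsSpectralMeasure D E μ) (hσ : MeasurableSet σ) :
    E σ + E σᶜ = 1 := by
  refine ((hE.isSelfAdjoint hσ).add (hE.isSelfAdjoint hσ.compl)).eq_of_re_inner_self_eq
    (IsSelfAdjoint.one _) fun x => ?_
  have := hE.finite x
  rw [add_apply, inner_add_left, Complex.add_re, ← hE.compat x σ hσ,
    ← hE.compat x σᶜ hσ.compl, ← hE.univ, ← hE.compat x _ MeasurableSet.univ,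
    ← ENNReal.toReal_add (measure_ne_top _ _) (measure_ne_top _ _), measure_add_measure_compl hσ]

theorem apply_add_apply_compl (hE : IsSpectralMeasure D E μ) (hσ : MeasurableSet σ) (x : H) :
    E σ x + E σᶜ x = x := by
  rw [← add_apply, hE.add_compl hσ, one_apply_eq_self]

theorem measure_apply (hE : IsSpectralMeasure D E μ) (hσ : MeasurableSet σ) (x : H) :
    μ (E σ x) = (μ x).restrict σ := by
  have := hE.finite x
  have := hE.finite (E σ x)
  refine Measure.ext fun τ hτ => ?_
  rw [Measure.restrict_apply hτ, ← ENNReal.toReal_eq_toReal_iff' (measure_ne_top _ _)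
    (measure_ne_top _ _), hE.measure_toReal hτ, hE.measure_toReal (hτ.inter hσ),
    hE.apply_apply hτ hσ]

theorem integrable_id (hE : IsSpectralMeasure D E μ) (x : H) : Integrable id (μ x) :=
  have := hE.finite x
  ((memLp_two_iff_integrable_sq aestronglyMeasurable_id).mpr (hE.moment_int x)).integrable
    one_le_two

theorem measure_eq_of_norm_apply_eq (hE : IsSpectralMeasure D E μ) {x y : H}
    (h : ∀ σ, MeasurableSet σ → ‖E σ x‖ = ‖E σ y‖) : μ x = μ y := by
  have := hE.finite x
  have := hE.finite y
  refine Measure.ext fun σ hσ => ?_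
  rw [← ENNReal.toReal_eq_toReal_iff' (measure_ne_top _ _) (measure_ne_top _ _),
    hE.measure_toReal hσ, hE.measure_toReal hσ, h σ hσ]

theorem norm_apply_eq_of_measure_eq (hE : IsSpectralMeasure D E μ) {x y : H} (h : μ x = μ y) :
    ‖D x‖ = ‖D y‖ :=
  (pow_left_inj₀ (norm_nonneg _) (norm_nonneg _) two_ne_zero).mp <| by
    rw [hE.moment2, hE.moment2, h]

theorem re_inner_apply_apply_compl (hE : IsSpectralMeasure D E μ) (hD : IsSelfAdjoint D)
    (hσ : MeasurableSet σ) (x : H) : (⟪D (E σ x), E σᶜ x⟫).re = 0 := by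
  have hDsymm : ∀ x y, ⟪D x, y⟫ = ⟪x, D y⟫ := hD.isSymmetric
  have hsplit : ⟪D x, x⟫ = ⟪D (E σ x), E σ x⟫ + ⟪D (E σᶜ x), E σᶜ x⟫ +
      (⟪D (E σ x), E σᶜ x⟫ + (starRingEnd ℂ) ⟪D (E σ x), E σᶜ x⟫) := by
    conv_lhs => rw [← hE.apply_add_apply_compl hσ x]
    have hcross : ⟪D (E σᶜ x), E σ x⟫ = (starRingEnd ℂ) ⟪D (E σ x), E σᶜ x⟫ := by
      rw [hDsymm, inner_conj_symm]
    rw [map_add, inner_add_left, inner_add_right, inner_add_right, hcross]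
    ring
  have hint : (⟪D x, x⟫).re = (⟪D (E σ x), E σ x⟫).re + (⟪D (E σᶜ x), E σᶜ x⟫).re := by
    rw [hE.moment1, hE.moment1, hE.moment1, hE.measure_apply hσ, hE.measure_apply hσ.compl]
    exact (integral_add_compl hσ (hE.integrable_id x)).symm
  have := congr(Complex.re $hsplit)
  simp only [Complex.add_re, Complex.conj_re] at this
  linarith

theorem compl_apply_apply (hE : IsSpectralMeasure D E μ) (hD : IsSelfAdjoint D)
    (hσ : MeasurableSet σ) (x : H) : E σᶜ (D (E σ x)) = 0 := by
  set B := E σᶜ ∘L D ∘L E σ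
  -- `B + B†` has vanishing quadratic form; on the range of `E σ` its `B†` part vanishes.
  have hB : B + adjoint B = 0 := by
    refine (IsSelfAdjoint.add_star_self B).eq_of_re_inner_self_eq (IsSelfAdjoint.zero _)
      fun g => ?_
    have hBg : (⟪B g, g⟫).re = 0 := by
      rw [comp_apply, comp_apply, hE.inner_apply_left hσ.compl,
        hE.re_inner_apply_apply_compl hD hσ]
    rw [star_eq_adjoint, add_apply, zero_apply, inner_zero_left, inner_add_left,
      adjoint_inner_left, Complex.add_re, ← inner_conj_symm g, Complex.conj_re, hBg]
    simp
  have hBadj : adjoint B = E σ ∘L D ∘L E σᶜ := by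
    simp only [B, adjoint_comp, hD.adjoint_eq, hE.selfadj _ hσ, hE.selfadj _ hσ.compl, comp_assoc]
  have := congr($hB (E σ x))
  rwa [add_apply, hBadj, comp_apply, comp_apply, comp_apply, comp_apply,
    hE.apply_apply_of_disjoint hσ.compl hσ disjoint_compl_left, map_zero, map_zero, add_zero,
    hE.apply_apply_self hσ] at this

theorem apply_comm_of_compl_apply_apply (hE : IsSpectralMeasure D E μ) {T : H →L[ℂ] H}
    (hT : ∀ σ, MeasurableSet σ → ∀ x, E σᶜ (T (E σ x)) = 0) (hσ : MeasurableSet σ) (x : H) :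
    T (E σ x) = E σ (T x) := by
  have hfix : ∀ τ, MeasurableSet τ → ∀ y, E τ (T (E τ y)) = T (E τ y) := fun τ hτ y => by
    rw [← add_zero (E τ _), ← hT τ hτ y, hE.apply_add_apply_compl hτ]
  have hcompl : E σ (T (E σᶜ x)) = 0 := by
    rw [← hfix σᶜ hσ.compl x, hE.apply_apply_of_disjoint hσ hσ.compl disjoint_compl_right]
  calc T (E σ x) = E σ (T (E σ x)) + E σ (T (E σᶜ x)) := by rw [hfix σ hσ, hcompl, add_zero]
    _ = E σ (T x) := by rw [← map_add, ← map_add, hE.apply_add_apply_compl hσ]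

theorem adjoint_comp_comp_eq_of_measure_eq (hE : IsSpectralMeasure D E μ)
    (hD : IsSelfAdjoint D) {A : H →L[ℂ] H} (hA : ∀ x, μ (A x) = μ (D x)) :
    adjoint A ∘L D ∘L A = D ∘L D ∘L D := by
  have hDsymm : ∀ x y, ⟪D x, y⟫ = ⟪x, D y⟫ := hD.isSymmetric
  have hD3 : IsSelfAdjoint (D ∘L D ∘L D) := by simpa [hD.adjoint_eq] using hD.adjoint_conj D
  refine (hD.adjoint_conj A).eq_of_re_inner_self_eq hD3 fun x => ?_
  calc (⟪(adjoint A ∘L D ∘L A) x, x⟫).re = (⟪D (A x), A x⟫).re := by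
        rw [comp_apply, comp_apply, adjoint_inner_left]
    _ = (⟪D (D x), D x⟫).re := by rw [hE.moment1, hE.moment1, hA]
    _ = (⟪(D ∘L D ∘L D) x, x⟫).re := by rw [comp_apply, comp_apply, hDsymm (D (D x))]

end IsSpectralMeasure

theorem quasinormal_of_absolutely_continuous_general {H : Type*} [NormedAddCommGroup H]
    [InnerProductSpace ℂ H] [CompleteSpace H]
    (A U absA : H →L[ℂ] H)
    (habs_pos : absA.IsPositive)
    (habs_sq : absA ∘L absA = ContinuousLinearMap.adjoint A ∘L A)
    (hU1 : A = U ∘L absA)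
    (hU3 : ∀ h, A h = 0 → U h = 0)
    (E : Set ℝ → H →L[ℂ] H) (μ : H → Measure ℝ)
    (hE : IsSpectralMeasure absA E μ)
    (hac : ∀ (f : H) (σ : Set ℝ), MeasurableSet σ →
      ⟪E σ (absA f), absA f⟫ = 0 → ⟪E σ (A f), A f⟫ = 0) :
    U ∘L absA = absA ∘L U := by
  have hD : IsSelfAdjoint absA := habs_pos.isSelfAdjoint
  have hnorm := norm_apply_eq_of_comp_self_eq_adjoint_comp hD habs_sq
  have hDE : ∀ σ, MeasurableSet σ → ∀ x, absA (E σ x) = E σ (absA x) := fun _ =>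
    hE.apply_comm_of_compl_apply_apply fun _ => hE.compl_apply_apply hD
  have hAE : ∀ σ, MeasurableSet σ → ∀ x, A (E σ x) = E σ (A x) := fun _ =>
    hE.apply_comm_of_compl_apply_apply fun σ hσ x =>
      (hE.inner_apply_self_eq_zero_iff hσ.compl _).mp <|
        hac _ _ hσ.compl <| by rw [hE.compl_apply_apply hD hσ, inner_zero_left]
  have hμ : ∀ x, μ (A x) = μ (absA x) := fun x =>
    hE.measure_eq_of_norm_apply_eq fun σ hσ => by rw [← hAE σ hσ, ← hDE σ hσ, hnorm]
  have hcomm : A ∘L absA = absA ∘L A := comp_comm_of_adjoint_comp_comp_eq hD habs_sq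
    (hE.adjoint_comp_comp_eq_of_measure_eq hD hμ) fun x => hE.norm_apply_eq_of_measure_eq (hμ x)
  refine eq_of_comp_eq_of_eq_on_ker hD (by rw [← hU1, comp_assoc, ← hU1, hcomm]) fun x hx => ?_
  have hUx : U x = 0 := hU3 x (by rw [← norm_eq_zero, hnorm, hx, norm_zero])
  simp [hx, hUx]

/-- If `⟨E(·)Af, Af⟩` is absolutely continuous with respect to `⟨E(·)|A|f, |A|f⟩` for every
`f` (where `E` is the spectral measure of `|A|`), then `A` is quasinormal:
`U|A| = |A|U` for the polar decomposition `A = U|A|`. -/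
theorem quasinormal_of_absolutely_continuous {H : Type*} [NormedAddCommGroup H]
    [InnerProductSpace ℂ H] [CompleteSpace H]
    (A U absA : H →L[ℂ] H)
    (habs_pos : absA.IsPositive)
    (habs_sq : absA ∘L absA = ContinuousLinearMap.adjoint A ∘L A)
    (hU1 : A = U ∘L absA)
    (hU2 : ∀ f, ‖U (absA f)‖ = ‖absA f‖)
    (hU3 : ∀ h, A h = 0 → U h = 0)
    (E : Set ℝ → H →L[ℂ] H) (μ : H → Measure ℝ)
    (hE : IsSpectralMeasure absA E μ)
    (hac : ∀ (f : H) (σ : Set ℝ), MeasurableSet σ →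
      ⟪E σ (absA f), absA f⟫ = 0 → ⟪E σ (A f), A f⟫ = 0) :
    U ∘L absA = absA ∘L U :=
  quasinormal_of_absolutely_continuous_general A U absA habs_pos habs_sq hU1 hU3 E μ hE hac
end
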